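/- arXiv:2402.06893 — 2 statements merged into one kernel-verified Lean document; each statement's English description precedes it below -/
import Mathlib

section
/- For each integer m ≥ 2, let g_m = ℝ ⋉_A ℝ^{2m+1} with A = diag(0, 1/m, 2/m, …, 1, −1/m, −2/m, …, −1), with dual basis (x^1,…,x^{m+1}, y^1,…,y^{m+1}) of g_m^* and Chevalley–Eilenberg differential determined by dx^1 = dx^2 = 0, dx^{α} = −((α−2)/m) x^1∧x^{α} for 3 ≤ α ≤ m+1, dy^1 = −x^1∧y^1, and dy^{β} = ((β−1)/m) x^1∧y^{β} for 2 ≤ β ≤ m+1. Then the 2-form ω := Σ_{α=1}^{m+1} x^α∧y^α is nondegenerate, the 1-form θ := (1/m) x^1 is closed, and dω = θ ∧ ω; that is, ω defines a left-invariant locally conformally symplectic structure with Lee form θ. -/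
/-! The summands `x^a ∧ y^a` of `ω` are commuting square-zero elements, so
`ω^{m+1} = (m+1)! • Π_a (x^a ∧ y^a)`, and this product of distinct basis covectors is detected by
the determinant pairing with the dual basis. For `dω`, every generator `z` satisfies
`dz = c_z • x^1 ∧ z`, so `d(x^a ∧ y^a) = (c_{x^a} + c_{y^a}) • x^1 ∧ x^a ∧ y^a`, and the two
coefficients add up to `1/m` (for `a = 0` both sides vanish since `x^1 ∧ x^1 = 0`). -/

namespace Commute

variable {A : Type*} [Semiring A]

theorem add_pow_succ_of_mul_self_eq_zero {a b : A} (h : Commute a b) (ha : a * a = 0) (n : ℕ) :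
    (a + b) ^ (n + 1) = b ^ (n + 1) + (n + 1) • (a * b ^ n) := by
  induction n with
  | zero => simp [add_comm]
  | succ n ih =>
    have h1 : a * (a * b ^ n) = 0 := by rw [← mul_assoc, ha, zero_mul]
    have h2 : b * (a * b ^ n) = a * b ^ (n + 1) := by
      rw [← mul_assoc, ← h.eq, mul_assoc, ← pow_succ']
    rw [pow_succ', ih, add_mul, mul_add, mul_add, mul_smul_comm, mul_smul_comm, h1, h2, ← pow_succ',
      smul_zero, succ_nsmul _ (n + 1)]
    abel

end Commute

section SquareZero

variable {A : Type*} [Semiring A]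

theorem sum_pow_eq_zero_of_mul_self_eq_zero {n : ℕ} (f : Fin n → A) (hsq : ∀ i, f i * f i = 0)
    (hcomm : ∀ i j, Commute (f i) (f j)) {k : ℕ} (hk : n < k) : (∑ i, f i) ^ k = 0 := by
  induction n generalizing k with
  | zero => simpa using zero_pow (by omega)
  | succ n ih =>
    obtain ⟨j, rfl⟩ : ∃ j, k = j + 1 := ⟨k - 1, by omega⟩
    have h0 : Commute (f 0) (∑ i : Fin n, f i.succ) := .sum_right _ _ _ fun _ _ => hcomm _ _
    rw [Fin.sum_univ_succ, h0.add_pow_succ_of_mul_self_eq_zero (hsq 0),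
      ih _ (fun _ => hsq _) (fun _ _ => hcomm _ _) (by omega),
      ih _ (fun _ => hsq _) (fun _ _ => hcomm _ _) (by omega), mul_zero, smul_zero, add_zero]

theorem sum_pow_eq_factorial_smul_prod {n : ℕ} (f : Fin n → A) (hsq : ∀ i, f i * f i = 0)
    (hcomm : ∀ i j, Commute (f i) (f j)) : (∑ i, f i) ^ n = n.factorial • (List.ofFn f).prod := by
  induction n with
  | zero => simp
  | succ n ih =>
    have h0 : Commute (f 0) (∑ i : Fin n, f i.succ) := .sum_right _ _ _ fun _ _ => hcomm _ _
    rw [Fin.sum_univ_succ, h0.add_pow_succ_of_mul_self_eq_zero (hsq 0),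
      sum_pow_eq_zero_of_mul_self_eq_zero _ (fun _ => hsq _) (fun _ _ => hcomm _ _) (by omega),
      ih _ (fun _ => hsq _) (fun _ _ => hcomm _ _), mul_smul_comm, smul_smul, zero_add,
      List.ofFn_succ, List.prod_cons, Nat.factorial_succ]

end SquareZero

namespace ExteriorAlgebra

variable {R M : Type*} [CommRing R] [AddCommGroup M] [Module R M]

theorem ι_mul_ι_anticomm (u v : M) : ι R u * ι R v = -(ι R v * ι R u) :=
  CliffordAlgebra.ι_mul_ι_comm_of_isOrtho (.all u v)

theorem commute_ι_ι_mul_ι (u v w : M) : Commute (ι R u) (ι R v * ι R w) := by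
  rw [commute_iff_eq, ← mul_assoc, ι_mul_ι_anticomm u v, neg_mul, mul_assoc, ι_mul_ι_anticomm u w,
    mul_neg, neg_neg, mul_assoc]

theorem commute_ι_mul_ι (u v u' v' : M) : Commute (ι R u * ι R v) (ι R u' * ι R v') :=
  (commute_ι_ι_mul_ι u u' v').mul_left (commute_ι_ι_mul_ι v u' v')

theorem ι_mul_ι_mul_self (u v : M) : ι R u * ι R v * (ι R u * ι R v) = 0 := by
  rw [mul_assoc, (commute_ι_ι_mul_ι v u v).eq, ← mul_assoc, ← mul_assoc, ι_sq_zero, zero_mul,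
    zero_mul]

theorem apply_ι_mul_ι_eq_smul (d : ExteriorAlgebra R M → ExteriorAlgebra R M) {u v w : M}
    {c c' : R} (hd : d (ι R u * ι R v) = d (ι R u) * ι R v - ι R u * d (ι R v))
    (hu : d (ι R u) = c • (ι R w * ι R u)) (hv : d (ι R v) = c' • (ι R w * ι R v)) :
    d (ι R u * ι R v) = (c + c') • (ι R w * (ι R u * ι R v)) := by
  rw [hd, hu, hv, mul_smul_comm, ← mul_assoc (ι R u), ι_mul_ι_anticomm u w, smul_mul_assoc,
    neg_mul, smul_neg, sub_neg_eq_add, ← add_smul, mul_assoc]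

theorem ιMulti_ne_zero_of_dual [Nontrivial R] {n : ℕ} (v : Fin n → M)
    (f : Fin n → Module.Dual R M) (h₁ : ∀ i, f i (v i) = 1)
    (h₀ : ∀ ⦃i j⦄, i ≠ j → f i (v j) = 0) : ιMulti R n v ≠ 0 := by
  intro hv
  have := exteriorPower.pairingDual_apply_apply_eq_one v f h₁ h₀ n (RelEmbedding.refl _)
  have h0 : exteriorPower.ιMulti R n (v ∘ RelEmbedding.refl (· ≤ ·)) = 0 := Subtype.ext hv
  rw [h0, map_zero] at this
  exact zero_ne_one this

theorem prod_map_ι_single_ne_zero [Nontrivial R] {I : Type*} [DecidableEq I] {l : List I}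
    (hl : l.Nodup) : (l.map fun i => ι R (Pi.single i (1 : R))).prod ≠ 0 := by
  have hinj := List.nodup_iff_injective_get.mp hl
  rw [← List.ofFn_get l, List.map_ofFn, Function.comp_def, ← ιMulti_apply]
  refine ιMulti_ne_zero_of_dual _ (fun i => LinearMap.proj (l.get i)) (by simp) fun i j hij => ?_
  simpa [Pi.single_apply] using hinj.ne hij

noncomputable def darbouxForm (R : Type*) [CommRing R] (n : ℕ) :
    ExteriorAlgebra R (Fin n ⊕ Fin n → R) :=
  ∑ a : Fin n, ι R (Pi.single (Sum.inl a) 1 : Fin n ⊕ Fin n → R) * ι R (Pi.single (Sum.inr a) 1)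

theorem prod_ofFn_ι_inl_mul_ι_inr_ne_zero (R : Type*) [CommRing R] [Nontrivial R] (n : ℕ) :
    (List.ofFn fun a : Fin n =>
      ι R (Pi.single (Sum.inl a) 1 : Fin n ⊕ Fin n → R) * ι R (Pi.single (Sum.inr a) 1)).prod
      ≠ 0 := by
  have hflat : (List.ofFn fun a : Fin n =>
      ι R (Pi.single (Sum.inl a) 1 : Fin n ⊕ Fin n → R) * ι R (Pi.single (Sum.inr a) 1)).prod =
      (((List.ofFn fun a : Fin n => [Sum.inl a, Sum.inr a]).flatten).map
        fun i => ι R (Pi.single i (1 : R))).prod := by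
    simp [List.map_flatten, List.prod_flatten, List.map_ofFn, Function.comp_def]
  rw [hflat]
  refine prod_map_ι_single_ne_zero (List.nodup_flatten.mpr ⟨?_, ?_⟩)
  · simp
  · rw [List.pairwise_ofFn]
    intro i j hij
    simp [hij.ne']

theorem darbouxForm_pow_ne_zero (K : Type*) [Field K] [CharZero K] (n : ℕ) :
    darbouxForm K n ^ n ≠ 0 := by
  rw [darbouxForm, sum_pow_eq_factorial_smul_prod _ (fun _ => ι_mul_ι_mul_self _ _)
    (fun _ _ => commute_ι_mul_ι _ _ _ _), ← Nat.cast_smul_eq_nsmul K]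
  exact smul_ne_zero (Nat.cast_ne_zero.mpr n.factorial_ne_zero)
    (prod_ofFn_ι_inl_mul_ι_inr_ne_zero K n)

end ExteriorAlgebra

theorem solvmanifold_lcs_structure_general (m : ℕ)
    (d : ExteriorAlgebra ℝ ((Fin (m + 1) ⊕ Fin (m + 1)) → ℝ) →ₗ[ℝ]
         ExteriorAlgebra ℝ ((Fin (m + 1) ⊕ Fin (m + 1)) → ℝ))
    -- the generators `x^α`, `y^β` of `⋀^1 g_m^*`
    (x y : Fin (m + 1) → ExteriorAlgebra ℝ ((Fin (m + 1) ⊕ Fin (m + 1)) → ℝ))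
    (hx : ∀ a, x a = ExteriorAlgebra.ι ℝ (Pi.single (Sum.inl a) 1))
    (hy : ∀ b, y b = ExteriorAlgebra.ι ℝ (Pi.single (Sum.inr b) 1))
    -- `d` is an antiderivation (degree-one graded derivation):
    (hleib : ∀ (v : (Fin (m + 1) ⊕ Fin (m + 1)) → ℝ)
      (b : ExteriorAlgebra ℝ ((Fin (m + 1) ⊕ Fin (m + 1)) → ℝ)),
      d (ExteriorAlgebra.ι ℝ v * b)
        = d (ExteriorAlgebra.ι ℝ v) * b - ExteriorAlgebra.ι ℝ v * d b)
    -- the Chevalley–Eilenberg structure equations of `g_m`: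
    (hdx : ∀ a : Fin (m + 1),
      d (x a) = ((1 - ((a : ℕ) : ℝ)) / m) • (x 0 * x a))
    (hdy0 : d (y 0) = -(x 0 * y 0))
    (hdy : ∀ b : Fin (m + 1), 1 ≤ (b : ℕ) →
      d (y b) = (((b : ℕ) : ℝ) / m) • (x 0 * y b)) :
    -- `ω = Σ_α x^α ∧ y^α` is nondegenerate: `ω^{m+1} ≠ 0`
    (∑ a : Fin (m + 1), x a * y a) ^ (m + 1) ≠ 0 ∧
    -- `θ = (1/m) x^1` is closed
    d ((1 / (m : ℝ)) • x 0) = 0 ∧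
    -- `dω = θ ∧ ω`
    d (∑ a : Fin (m + 1), x a * y a)
      = ((1 / (m : ℝ)) • x 0) * ∑ a : Fin (m + 1), x a * y a := by
  open ExteriorAlgebra in
  have hterm : ∀ a, d (x a * y a) = (1 / (m : ℝ)) • (x 0 * (x a * y a)) := by
    intro a
    simp only [hx, hy] at hdx hdy0 hdy ⊢
    rcases Nat.eq_zero_or_pos a with ha | ha
    · obtain rfl : a = 0 := Fin.ext ha
      rw [← neg_one_smul ℝ] at hdy0
      rw [apply_ι_mul_ι_eq_smul d (hleib _ _) (hdx 0) hdy0, ← mul_assoc, ι_sq_zero,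
        zero_mul, smul_zero, smul_zero]
    · rw [apply_ι_mul_ι_eq_smul d (hleib _ _) (hdx a) (hdy a ha), ← add_div, sub_add_cancel]
  refine ⟨by simp only [hx, hy]; exact ExteriorAlgebra.darbouxForm_pow_ne_zero ℝ (m + 1),
    by rw [map_smul, hdx 0, hx 0, ExteriorAlgebra.ι_sq_zero, smul_zero, smul_zero], ?_⟩
  rw [map_sum, Finset.mul_sum]
  simp only [hterm, smul_mul_assoc]

theorem solvmanifold_lcs_structure (m : ℕ) (hm : 2 ≤ m)
    (d : ExteriorAlgebra ℝ ((Fin (m + 1) ⊕ Fin (m + 1)) → ℝ) →ₗ[ℝ]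
         ExteriorAlgebra ℝ ((Fin (m + 1) ⊕ Fin (m + 1)) → ℝ))
    -- the generators `x^α`, `y^β` of `⋀^1 g_m^*`
    (x y : Fin (m + 1) → ExteriorAlgebra ℝ ((Fin (m + 1) ⊕ Fin (m + 1)) → ℝ))
    (hx : ∀ a, x a = ExteriorAlgebra.ι ℝ (Pi.single (Sum.inl a) 1))
    (hy : ∀ b, y b = ExteriorAlgebra.ι ℝ (Pi.single (Sum.inr b) 1))
    -- `d` is an antiderivation (degree-one graded derivation):
    (hd1 : d 1 = 0)
    (hleib : ∀ (v : (Fin (m + 1) ⊕ Fin (m + 1)) → ℝ)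
      (b : ExteriorAlgebra ℝ ((Fin (m + 1) ⊕ Fin (m + 1)) → ℝ)),
      d (ExteriorAlgebra.ι ℝ v * b)
        = d (ExteriorAlgebra.ι ℝ v) * b - ExteriorAlgebra.ι ℝ v * d b)
    -- the Chevalley–Eilenberg structure equations of `g_m`:
    (hdx : ∀ a : Fin (m + 1),
      d (x a) = ((1 - ((a : ℕ) : ℝ)) / m) • (x 0 * x a))
    (hdy0 : d (y 0) = -(x 0 * y 0))
    (hdy : ∀ b : Fin (m + 1), 1 ≤ (b : ℕ) →
      d (y b) = (((b : ℕ) : ℝ) / m) • (x 0 * y b)) :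
    -- `ω = Σ_α x^α ∧ y^α` is nondegenerate: `ω^{m+1} ≠ 0`
    (∑ a : Fin (m + 1), x a * y a) ^ (m + 1) ≠ 0 ∧
    -- `θ = (1/m) x^1` is closed
    d ((1 / (m : ℝ)) • x 0) = 0 ∧
    -- `dω = θ ∧ ω`
    d (∑ a : Fin (m + 1), x a * y a)
      = ((1 / (m : ℝ)) • x 0) * ∑ a : Fin (m + 1), x a * y a :=
  solvmanifold_lcs_structure_general m d x y hx hy hleib hdx hdy0 hdy
end

section
/- For each integer m ≥ 2, consider the Lie algebra g_m = ℝ ⋉_A ℝ^{2m+1} as above with dual basis (x^1,…,x^{m+1}, y^1,…,y^{m+1}), and the almost complex structure J determined by 𝒥x^α = −y^α, 𝒥y^α = x^α for 1 ≤ α ≤ m+1. Then J is not integrable: the exterior derivative of the (1,0)-form z^2 := x^2 + i y^2 equals (i/m) x^1∧y^2 = (1/(4m))(z^1∧z^2 − z^1∧z̄^2 + z̄^1∧z^2 − z̄^1∧z̄^2), which is not contained in ⋀^{2,0} ⊕ ⋀^{1,1}; in particular its (−1,2)-component is nonzero. -/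
/-!
The substitution `x^a ↦ e_a`, `y^a ↦ i e_a` records (twice) the `z̄`-coordinates of a covector;
the algebra map of exterior algebras it induces kills every `z^a`, hence every product `z^a ∧ w`
and so the span of `⋀^{2,0}` and `⋀^{1,1}`, while it sends `z̄^1 ∧ z̄^2` to `4 e_1 ∧ e_2 ≠ 0`.
Expanding `dz^2 = (i/m) x^1 ∧ y^2` in the basis `z, z̄` shows that `dz^2` lies in that span up to
the term `-(1/(4m)) z̄^1 ∧ z̄^2`.
-/

open ExteriorAlgebra Complex

namespace ExteriorAlgebra

theorem ι_mul_ι_ne_zero {K E : Type*} [Field K] [AddCommGroup E] [Module K E] {v : Fin 2 → E}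
    (hv : LinearIndependent K v) : ι K (v 0) * ι K (v 1) ≠ 0 := by
  open Set.powersetCard in
  let s : Set.powersetCard (Fin 2) 2 := ofCard (s := Finset.univ) rfl
  have hs : ofFinEmbEquiv.symm s 0 = 0 ∧ ofFinEmbEquiv.symm s 1 = 1 := by
    have := (ofFinEmbEquiv.symm s).lt_iff_lt.2 (show (0 : Fin 2) < 1 by decide)
    omega
  have h := (exteriorPower.ιMulti_family_linearIndependent_field (n := 2) hv).ne_zero s
  contrapose! h
  ext
  simpa [exteriorPower.ιMulti_family, ιMulti_apply, Matrix.vecTail, hs] using h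

end ExteriorAlgebra

section ComplexCoordinates

variable {α : Type*}

/-- `zbarCoeff v a` is twice the `z̄^a`-coordinate of the covector
`∑ (v (inl a) x^a + v (inr a) y^a)`. -/
def zbarCoeff : ((α ⊕ α) → ℂ) →ₗ[ℂ] (α → ℂ) :=
  LinearMap.pi fun a => LinearMap.proj (Sum.inl a) + I • LinearMap.proj (Sum.inr a)

variable (x y z zb : α → ExteriorAlgebra ℂ ((α ⊕ α) → ℂ))

theorem z_mul_z_sub_z_mul_zb_add_zb_mul_z_sub_zb_mul_zb (hz : ∀ a, z a = x a + I • y a)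
    (hzb : ∀ a, zb a = x a - I • y a) (a b : α) :
    z a * z b - z a * zb b + zb a * z b - zb a * zb b = (4 * I) • (x a * y b) := by
  have hx : z a + zb a = (2 : ℂ) • x a := by rw [hz, hzb]; module
  have hy : z b - zb b = (2 * I) • y b := by rw [hz, hzb]; module
  calc z a * z b - z a * zb b + zb a * z b - zb a * zb b = (z a + zb a) * (z b - zb b) := by
        noncomm_ring
    _ = (4 * I) • (x a * y b) := by
        rw [hx, hy, smul_mul_smul_comm, ← mul_assoc]
        norm_num

variable [DecidableEq α]

theorem zbarCoeff_single_inl (a : α) :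
    zbarCoeff (Pi.single (Sum.inl a) 1 : (α ⊕ α) → ℂ) = Pi.single a 1 := by
  ext b
  by_cases h : b = a <;> simp [zbarCoeff, h]

theorem zbarCoeff_single_inr (a : α) :
    zbarCoeff (Pi.single (Sum.inr a) 1 : (α ⊕ α) → ℂ) = I • Pi.single a 1 := by
  ext b
  by_cases h : b = a <;> simp [zbarCoeff, h]

theorem map_zbarCoeff_z (hx : ∀ a, x a = ι ℂ (Pi.single (Sum.inl a) 1))
    (hy : ∀ a, y a = ι ℂ (Pi.single (Sum.inr a) 1)) (hz : ∀ a, z a = x a + I • y a) (a : α) :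
    map zbarCoeff (z a) = 0 := by
  rw [hz, hx, hy, map_add, map_smul, map_apply_ι, map_apply_ι, zbarCoeff_single_inl,
    zbarCoeff_single_inr, map_smul, smul_smul, I_mul_I, neg_one_smul, add_neg_cancel]

theorem map_zbarCoeff_zb (hx : ∀ a, x a = ι ℂ (Pi.single (Sum.inl a) 1))
    (hy : ∀ a, y a = ι ℂ (Pi.single (Sum.inr a) 1)) (hzb : ∀ a, zb a = x a - I • y a) (a : α) :
    map zbarCoeff (zb a) = (2 : ℂ) • ι ℂ (Pi.single a 1) := by
  rw [hzb, hx, hy, map_sub, map_smul, map_apply_ι, map_apply_ι, zbarCoeff_single_inl,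
    zbarCoeff_single_inr, map_smul, smul_smul, I_mul_I, neg_one_smul, sub_neg_eq_add, two_smul]

theorem span_z_mul_le_ker_map_zbarCoeff (hx : ∀ a, x a = ι ℂ (Pi.single (Sum.inl a) 1))
    (hy : ∀ a, y a = ι ℂ (Pi.single (Sum.inr a) 1)) (hz : ∀ a, z a = x a + I • y a) :
    Submodule.span ℂ ({w | ∃ a b, w = z a * z b} ∪ {w | ∃ a b, w = z a * zb b}) ≤
      LinearMap.ker (map (zbarCoeff (α := α))).toLinearMap := by
  rw [Submodule.span_le]
  rintro w (⟨a, b, rfl⟩ | ⟨a, b, rfl⟩) <;>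
    simp [map_zbarCoeff_z x y z hx hy hz]

theorem map_zbarCoeff_smul_zb_mul_zb_ne_zero (hx : ∀ a, x a = ι ℂ (Pi.single (Sum.inl a) 1))
    (hy : ∀ a, y a = ι ℂ (Pi.single (Sum.inr a) 1)) (hzb : ∀ a, zb a = x a - I • y a)
    {a b : α} (hab : a ≠ b) {c : ℂ} (hc : c ≠ 0) :
    map zbarCoeff (c • (zb a * zb b)) ≠ 0 := by
  have hind : LinearIndependent ℂ ![(Pi.single a 1 : α → ℂ), Pi.single b 1] := by
    refine LinearIndependent.pair_iff.2 fun s t h => ⟨?_, ?_⟩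
    · simpa [hab] using congr_fun h a
    · simpa [hab.symm] using congr_fun h b
  rw [map_smul, map_mul, map_zbarCoeff_zb x y zb hx hy hzb, map_zbarCoeff_zb x y zb hx hy hzb,
    smul_mul_smul_comm, smul_smul]
  exact smul_ne_zero (by simpa using hc) (ι_mul_ι_ne_zero hind)

theorem zb_mul_z (hx : ∀ a, x a = ι ℂ (Pi.single (Sum.inl a) 1))
    (hy : ∀ a, y a = ι ℂ (Pi.single (Sum.inr a) 1)) (hz : ∀ a, z a = x a + I • y a)
    (hzb : ∀ a, zb a = x a - I • y a) (a b : α) :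
    zb a * z b = -(z b * zb a) := by
  simp only [hz, hzb, hx, hy, ← map_smul, ← map_add, ← map_sub]
  exact eq_neg_of_add_eq_zero_left (ι_add_mul_swap _ _)

end ComplexCoordinates

theorem solvmanifold_not_integrable_general (m : ℕ) (hm : 2 ≤ m)
    (d : ExteriorAlgebra ℂ ((Fin (m + 1) ⊕ Fin (m + 1)) → ℂ) →ₗ[ℂ]
         ExteriorAlgebra ℂ ((Fin (m + 1) ⊕ Fin (m + 1)) → ℂ))
    -- the generators `x^α`, `y^β` of `g_m^* ⊗ ℂ`
    (x y : Fin (m + 1) → ExteriorAlgebra ℂ ((Fin (m + 1) ⊕ Fin (m + 1)) → ℂ))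
    (hx : ∀ a, x a = ExteriorAlgebra.ι ℂ (Pi.single (Sum.inl a) 1))
    (hy : ∀ b, y b = ExteriorAlgebra.ι ℂ (Pi.single (Sum.inr b) 1))
    -- the `(1,0)`-forms `z^α = x^α + i y^α` and `(0,1)`-forms `z̄^α = x^α - i y^α`
    (z zb : Fin (m + 1) → ExteriorAlgebra ℂ ((Fin (m + 1) ⊕ Fin (m + 1)) → ℂ))
    (hz : ∀ a, z a = x a + Complex.I • y a)
    (hzb : ∀ a, zb a = x a - Complex.I • y a)
    -- the Chevalley–Eilenberg structure equations of `g_m`: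
    (hdx : ∀ a : Fin (m + 1),
      d (x a) = (((1 - ((a : ℕ) : ℝ)) / m : ℝ) : ℂ) • (x 0 * x a))
    (hdy : ∀ b : Fin (m + 1), 1 ≤ (b : ℕ) →
      d (y b) = ((((b : ℕ) : ℝ) / m : ℝ) : ℂ) • (x 0 * y b)) :
    -- `dz^2 = (i/m) x^1 ∧ y^2`
    d (z 1) = (Complex.I / m) • (x 0 * y 1) ∧
    -- `dz^2 = (1/(4m)) (z^1 z^2 - z^1 z̄^2 + z̄^1 z^2 - z̄^1 z̄^2)`
    d (z 1) = ((1 : ℂ) / (4 * m)) •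
      (z 0 * z 1 - z 0 * zb 1 + zb 0 * z 1 - zb 0 * zb 1) ∧
    -- `dz^2` is not contained in `⋀^{2,0} ⊕ ⋀^{1,1}`, so `J` is not integrable
    d (z 1) ∉ Submodule.span ℂ
      ({w | ∃ a b, w = z a * z b} ∪ {w | ∃ a b, w = z a * zb b}) ∧
    -- in particular the `(-1,2)`-component of `dz^2` is nonzero:
    d (z 1) + ((1 : ℂ) / (4 * m)) • (zb 0 * zb 1) ∈ Submodule.span ℂ
      ({w | ∃ a b, w = z a * z b} ∪ {w | ∃ a b, w = z a * zb b}) ∧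
    ((1 : ℂ) / (4 * m)) • (zb 0 * zb 1) ≠ 0 := by
  have hm0 : (m : ℂ) ≠ 0 := by exact_mod_cast (by omega : m ≠ 0)
  have hval : ((1 : Fin (m + 1)) : ℕ) = 1 := by rw [Fin.val_one', Nat.mod_eq_of_lt (by omega)]
  have h01 : (0 : Fin (m + 1)) ≠ 1 := by rw [Ne, Fin.ext_iff, hval]; simp
  have hc : (1 : ℂ) / (4 * m) ≠ 0 := by simp [hm0]
  have hdz : d (z 1) = (I / m) • (x 0 * y 1) := by
    rw [hz, map_add, map_smul, hdx, hdy 1 hval.ge, hval, smul_smul]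
    push_cast
    simp [div_eq_mul_inv]
  have hdz' : d (z 1) = ((1 : ℂ) / (4 * m)) •
      (z 0 * z 1 - z 0 * zb 1 + zb 0 * z 1 - zb 0 * zb 1) := by
    rw [hdz, z_mul_z_sub_z_mul_zb_add_zb_mul_z_sub_zb_mul_zb x y z zb hz hzb, smul_smul]
    congr 1
    field_simp
  have hmem : d (z 1) + ((1 : ℂ) / (4 * m)) • (zb 0 * zb 1) ∈ Submodule.span ℂ
      ({w | ∃ a b, w = z a * z b} ∪ {w | ∃ a b, w = z a * zb b}) := by
    rw [hdz', ← smul_add, sub_add_cancel, zb_mul_z x y z zb hx hy hz hzb]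
    refine Submodule.smul_mem _ _ (add_mem (sub_mem ?_ ?_) (neg_mem ?_))
    exacts [Submodule.subset_span (.inl ⟨0, 1, rfl⟩), Submodule.subset_span (.inr ⟨0, 1, rfl⟩),
      Submodule.subset_span (.inr ⟨1, 0, rfl⟩)]
  have hne := map_zbarCoeff_smul_zb_mul_zb_ne_zero x y zb hx hy hzb h01 hc
  refine ⟨hdz, hdz', fun h => hne ?_, hmem, fun h => hne (by rw [h, map_zero])⟩
  exact span_z_mul_le_ker_map_zbarCoeff x y z zb hx hy hz (by simpa using sub_mem hmem h)

theorem solvmanifold_not_integrable (m : ℕ) (hm : 2 ≤ m)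
    (d : ExteriorAlgebra ℂ ((Fin (m + 1) ⊕ Fin (m + 1)) → ℂ) →ₗ[ℂ]
         ExteriorAlgebra ℂ ((Fin (m + 1) ⊕ Fin (m + 1)) → ℂ))
    -- the generators `x^α`, `y^β` of `g_m^* ⊗ ℂ`
    (x y : Fin (m + 1) → ExteriorAlgebra ℂ ((Fin (m + 1) ⊕ Fin (m + 1)) → ℂ))
    (hx : ∀ a, x a = ExteriorAlgebra.ι ℂ (Pi.single (Sum.inl a) 1))
    (hy : ∀ b, y b = ExteriorAlgebra.ι ℂ (Pi.single (Sum.inr b) 1))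
    -- the `(1,0)`-forms `z^α = x^α + i y^α` and `(0,1)`-forms `z̄^α = x^α - i y^α`
    (z zb : Fin (m + 1) → ExteriorAlgebra ℂ ((Fin (m + 1) ⊕ Fin (m + 1)) → ℂ))
    (hz : ∀ a, z a = x a + Complex.I • y a)
    (hzb : ∀ a, zb a = x a - Complex.I • y a)
    -- `d` is an antiderivation:
    (hd1 : d 1 = 0)
    (hleib : ∀ (v : (Fin (m + 1) ⊕ Fin (m + 1)) → ℂ)
      (b : ExteriorAlgebra ℂ ((Fin (m + 1) ⊕ Fin (m + 1)) → ℂ)),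
      d (ExteriorAlgebra.ι ℂ v * b)
        = d (ExteriorAlgebra.ι ℂ v) * b - ExteriorAlgebra.ι ℂ v * d b)
    -- the Chevalley–Eilenberg structure equations of `g_m`:
    (hdx : ∀ a : Fin (m + 1),
      d (x a) = (((1 - ((a : ℕ) : ℝ)) / m : ℝ) : ℂ) • (x 0 * x a))
    (hdy0 : d (y 0) = -(x 0 * y 0))
    (hdy : ∀ b : Fin (m + 1), 1 ≤ (b : ℕ) →
      d (y b) = ((((b : ℕ) : ℝ) / m : ℝ) : ℂ) • (x 0 * y b)) :
    -- `dz^2 = (i/m) x^1 ∧ y^2`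
    d (z 1) = (Complex.I / m) • (x 0 * y 1) ∧
    -- `dz^2 = (1/(4m)) (z^1 z^2 - z^1 z̄^2 + z̄^1 z^2 - z̄^1 z̄^2)`
    d (z 1) = ((1 : ℂ) / (4 * m)) •
      (z 0 * z 1 - z 0 * zb 1 + zb 0 * z 1 - zb 0 * zb 1) ∧
    -- `dz^2` is not contained in `⋀^{2,0} ⊕ ⋀^{1,1}`, so `J` is not integrable
    d (z 1) ∉ Submodule.span ℂ
      ({w | ∃ a b, w = z a * z b} ∪ {w | ∃ a b, w = z a * zb b}) ∧
    -- in particular the `(-1,2)`-component of `dz^2` is nonzero: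
    d (z 1) + ((1 : ℂ) / (4 * m)) • (zb 0 * zb 1) ∈ Submodule.span ℂ
      ({w | ∃ a b, w = z a * z b} ∪ {w | ∃ a b, w = z a * zb b}) ∧
    ((1 : ℂ) / (4 * m)) • (zb 0 * zb 1) ≠ 0 :=
  solvmanifold_not_integrable_general m hm d x y hx hy z zb hz hzb hdx hdy
end
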